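/- For n ≥ 1, the signed count over all overpartitions π of n, weighted by (-1)^{ℓ_{N≤O}(π)} (counting all non-overlined parts when no overlined part exists), equals 2·(p''_o(n) - p''_e(n)), where p''_o(n) (resp. p''_e(n)) counts partitions of n in which the smallest part appears an odd (resp. even) number of times and the number of parts strictly greater than the smallest part is odd. -/

import Mathlib

/-!
Sort overpartitions by whether some part size lies strictly below the largest overlined part `M`.
If one does, toggling the overline on the smallest such size is an involution that preserves
`M` and changes the number of non-overlined parts `≤ M` by one, so these overpartitions cancel.
The rest either have no overlined part, and are just partitions weighted by `(-1)^(#parts)`, or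
consist of `M` overlined once and plain parts `≥ M`, i.e. a partition with its smallest part
overlined, weighted by `(-1)^(c - 1)` where `c` is the multiplicity of the smallest part. Writing
`g` for the number of larger parts, `(-1)^(c + g) + (-1)^(c + 1)` is `±2` when `g` is odd, with
sign `(-1)^(c + 1)`, and `0` otherwise.
-/

open scoped Classical

/-- An overpartition of `n`: a finite set of overlined part sizes (the first
occurrence of a size may be overlined, so overlined parts are distinct)
together with a multiset of non-overlined parts, all parts positive,
with total sum `n`. -/
structure Overpartition (n : ℕ) where
  overParts : Finset ℕ
  plain : Multiset ℕ
  over_pos : ∀ x ∈ overParts, 0 < x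
  plain_pos : ∀ x ∈ plain, 0 < x
  sum_eq : (∑ x ∈ overParts, x) + plain.sum = n
/-- Number of non-overlined parts of size at most the largest overlined part;
all non-overlined parts count if there is no overlined part. -/
noncomputable def lNleO {n : ℕ} (π : Overpartition n) : ℕ :=
  if π.overParts = ∅ then Multiset.card π.plain
  else Multiset.card (π.plain.filter (fun x => ∃ y ∈ π.overParts, x ≤ y))

open Finset

theorem natCard_sub_natCard_eq_sum_ite {α : Type*} [Fintype α] (P Q : α → Prop)
    [DecidablePred P] [DecidablePred Q] :
    (Nat.card {a // P a} : ℤ) - Nat.card {a // Q a} =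
      ∑ a, ((if P a then 1 else 0) - (if Q a then 1 else 0)) := by
  simp [Nat.card_eq_fintype_card, Fintype.card_subtype, sum_sub_distrib]

theorem neg_one_pow_eq_ite_even_sub_ite_odd (k : ℕ) :
    (-1 : ℤ) ^ k = (if Even k then 1 else 0) - (if Odd k then 1 else 0) := by
  by_cases h : Even k <;> simp [← Nat.not_even_iff_odd, h]

theorem neg_one_pow_add_add_neg_one_pow_succ (c g : ℕ) :
    (-1 : ℤ) ^ (c + g) + (-1) ^ (c + 1) =
      2 * ((if Odd c ∧ Odd g then 1 else 0) - (if Even c ∧ Odd g then 1 else 0)) := by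
  by_cases hc : Even c <;> by_cases hg : Even g <;>
    simp [pow_add, ← Nat.not_even_iff_odd, hc, hg]

theorem Multiset.card_eq_count_add_card_filter_lt {α : Type*} [LinearOrder α] {s : Multiset α}
    {m : α} (h : ∀ x ∈ s, m ≤ x) :
    Multiset.card s = s.count m + Multiset.card (s.filter (m < ·)) := by
  conv_lhs => rw [← Multiset.filter_add_not (m = ·) s]
  rw [Multiset.card_add, Multiset.count_eq_card_filter_eq,
    Multiset.filter_congr fun x hx => ((h x hx).lt_iff_ne).symm]

namespace Nat.Partition

variable {n : ℕ}

noncomputable def minPart (p : n.Partition) : ℕ := sInf {x | x ∈ p.parts}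

theorem minPart_le (p : n.Partition) {x : ℕ} (hx : x ∈ p.parts) : p.minPart ≤ x :=
  Nat.sInf_le hx

theorem minPart_eq_of_forall_le (p : n.Partition) {m : ℕ} (hm : m ∈ p.parts)
    (h : ∀ x ∈ p.parts, m ≤ x) : p.minPart = m :=
  le_antisymm (p.minPart_le hm) (le_csInf ⟨m, hm⟩ h)

theorem minPart_mem (hn : 0 < n) (p : n.Partition) : p.minPart ∈ p.parts := by
  refine Nat.sInf_mem (Multiset.exists_mem_of_ne_zero fun h => ?_)
  have := p.parts_sum
  simp [h] at this
  omega

theorem neg_one_pow_card_parts_add_neg_one_pow_count_minPart_succ (p : n.Partition) :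
    (-1 : ℤ) ^ Multiset.card p.parts + (-1) ^ (p.parts.count p.minPart + 1) =
      2 * ((if Odd (p.parts.count p.minPart) ∧
              Odd (Multiset.card (p.parts.filter (p.minPart < ·))) then 1 else 0) -
            (if Even (p.parts.count p.minPart) ∧
              Odd (Multiset.card (p.parts.filter (p.minPart < ·))) then 1 else 0)) := by
  rw [Multiset.card_eq_count_add_card_filter_lt fun x => p.minPart_le,
    neg_one_pow_add_add_neg_one_pow_succ]

end Nat.Partition

namespace Overpartition

variable {n : ℕ}

@[ext]
theorem ext {π ρ : Overpartition n} (hover : π.overParts = ρ.overParts)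
    (hplain : π.plain = ρ.plain) : π = ρ := by
  cases π; cases ρ; subst hover hplain; rfl

def toPartition (π : Overpartition n) : n.Partition where
  parts := π.overParts.val + π.plain
  parts_pos hi := (Multiset.mem_add.1 hi).elim (π.over_pos _) (π.plain_pos _)
  parts_sum := by rw [Multiset.sum_add, sum_val]; exact π.sum_eq

@[simp]
theorem toPartition_parts (π : Overpartition n) :
    π.toPartition.parts = π.overParts.val + π.plain :=
  rfl

theorem overParts_subset_range (π : Overpartition n) : π.overParts ⊆ range (n + 1) :=
  fun _ hx => mem_range_succ_iff.2 <|
    Nat.Partition.le_of_mem_parts (p := π.toPartition) (Multiset.mem_add.2 (Or.inl hx))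

theorem eq_of_toPartition_eq {π ρ : Overpartition n} (hparts : π.toPartition = ρ.toPartition)
    (hover : π.overParts = ρ.overParts) : π = ρ := by
  have h : π.overParts.val + π.plain = ρ.overParts.val + ρ.plain :=
    congrArg Nat.Partition.parts hparts
  exact ext hover (add_left_cancel (hover ▸ h))

noncomputable instance : Fintype (Overpartition n) :=
  Fintype.ofInjective
    (fun π => (π.toPartition,
      (⟨π.overParts, mem_powerset.2 π.overParts_subset_range⟩ : (range (n + 1)).powerset)))
    fun _ _ h => eq_of_toPartition_eq (Prod.ext_iff.1 h).1
      (congrArg Subtype.val (Prod.ext_iff.1 h).2)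

-- `0` when nothing is overlined, so that such overpartitions have no movable sizes below.
def maxOver (π : Overpartition n) : ℕ := π.overParts.sup id

theorem le_maxOver {π : Overpartition n} {x : ℕ} (hx : x ∈ π.overParts) : x ≤ π.maxOver :=
  le_sup (f := id) hx

theorem maxOver_mem {π : Overpartition n} (h : π.overParts.Nonempty) :
    π.maxOver ∈ π.overParts := by
  obtain ⟨x, hx, hmax⟩ := exists_mem_eq_sup π.overParts h id
  rw [maxOver, hmax]
  exact hx

theorem lNleO_eq_card_filter_le_maxOver {π : Overpartition n} (h : π.overParts.Nonempty) :
    lNleO π = Multiset.card (π.plain.filter (· ≤ π.maxOver)) := by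
  rw [lNleO, if_neg h.ne_empty]
  congr 1
  exact Multiset.filter_congr fun x _ =>
    ⟨fun ⟨_, hy, hxy⟩ => hxy.trans (le_maxOver hy), fun hx => ⟨_, maxOver_mem h, hx⟩⟩

noncomputable def toggle (π : Overpartition n) (k : ℕ)
    (hk : k ∈ π.overParts ∨ k ∈ π.plain) : Overpartition n :=
  if hko : k ∈ π.overParts then
    { overParts := π.overParts.erase k
      plain := k ::ₘ π.plain
      over_pos := fun x hx => π.over_pos x (mem_of_mem_erase hx)
      plain_pos := Multiset.forall_mem_cons.2 ⟨π.over_pos k hko, π.plain_pos⟩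
      sum_eq := by
        have h := π.sum_eq
        rw [← sum_erase_add _ _ hko] at h
        rw [Multiset.sum_cons]
        omega }
  else
    { overParts := insert k π.overParts
      plain := π.plain.erase k
      over_pos :=
        (forall_mem_insert _ _ _).2 ⟨π.plain_pos k (hk.resolve_left hko), π.over_pos⟩
      plain_pos := fun x hx => π.plain_pos x (Multiset.mem_of_mem_erase hx)
      sum_eq := by
        have h := π.sum_eq
        rw [← Multiset.sum_erase (hk.resolve_left hko)] at h
        rw [sum_insert hko]
        omega }

section toggle

variable {π : Overpartition n} {k : ℕ} (hk : k ∈ π.overParts ∨ k ∈ π.plain)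

theorem overParts_toggle_of_mem (hko : k ∈ π.overParts) :
    (π.toggle k hk).overParts = π.overParts.erase k := by
  simp [toggle, hko]

theorem plain_toggle_of_mem (hko : k ∈ π.overParts) :
    (π.toggle k hk).plain = k ::ₘ π.plain := by
  simp [toggle, hko]

theorem overParts_toggle_of_notMem (hko : k ∉ π.overParts) :
    (π.toggle k hk).overParts = insert k π.overParts := by
  simp [toggle, hko]

theorem plain_toggle_of_notMem (hko : k ∉ π.overParts) :
    (π.toggle k hk).plain = π.plain.erase k := by
  simp [toggle, hko]

theorem mem_overParts_toggle_self : k ∈ (π.toggle k hk).overParts ↔ k ∉ π.overParts := by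
  by_cases hko : k ∈ π.overParts
  · simp [overParts_toggle_of_mem hk hko, hko]
  · simp [overParts_toggle_of_notMem hk hko, hko]

theorem toggle_ne : π.toggle k hk ≠ π := fun h =>
  iff_not_self (h ▸ mem_overParts_toggle_self hk)

theorem mem_toggle_iff (x : ℕ) :
    x ∈ (π.toggle k hk).overParts ∨ x ∈ (π.toggle k hk).plain ↔
      x ∈ π.overParts ∨ x ∈ π.plain := by
  by_cases hko : k ∈ π.overParts
  · rw [overParts_toggle_of_mem hk hko, plain_toggle_of_mem hk hko]
    by_cases hx : x = k
    · subst hx; simp [hko]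
    · simp [hx]
  · rw [overParts_toggle_of_notMem hk hko, plain_toggle_of_notMem hk hko]
    by_cases hx : x = k
    · subst hx; simp [hk.resolve_left hko]
    · simp [hx, Multiset.mem_erase_of_ne hx]

-- Stated for `k' = k` because the second toggle needs a membership proof in `π.toggle k hk`,
-- whose size is in practice only propositionally equal to `k`.
theorem toggle_toggle {k' : ℕ}
    (hk' : k' ∈ (π.toggle k hk).overParts ∨ k' ∈ (π.toggle k hk).plain) (h : k' = k) :
    (π.toggle k hk).toggle k' hk' = π := by
  subst k'
  by_cases hko : k ∈ π.overParts
  · have hko' : k ∉ (π.toggle k hk).overParts := fun h => (mem_overParts_toggle_self hk).1 h hko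
    ext1
    · rw [overParts_toggle_of_notMem _ hko', overParts_toggle_of_mem hk hko, insert_erase hko]
    · rw [plain_toggle_of_notMem _ hko', plain_toggle_of_mem hk hko, Multiset.erase_cons_head]
  · have hko' : k ∈ (π.toggle k hk).overParts := (mem_overParts_toggle_self hk).2 hko
    ext1
    · rw [overParts_toggle_of_mem _ hko', overParts_toggle_of_notMem hk hko, erase_insert hko]
    · rw [plain_toggle_of_mem _ hko', plain_toggle_of_notMem hk hko,
        Multiset.cons_erase (hk.resolve_left hko)]

theorem maxOver_toggle (hkM : k < π.maxOver) : (π.toggle k hk).maxOver = π.maxOver := by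
  by_cases hko : k ∈ π.overParts
  · have hM : π.maxOver ∈ π.overParts.erase k :=
      mem_erase.2 ⟨hkM.ne', maxOver_mem ⟨k, hko⟩⟩
    rw [maxOver, overParts_toggle_of_mem hk hko]
    exact le_antisymm (sup_mono (erase_subset k _)) (le_sup (f := id) hM)
  · rw [maxOver, overParts_toggle_of_notMem hk hko, sup_insert]
    exact sup_eq_right.2 hkM.le

theorem neg_one_pow_card_filter_le_toggle {m : ℕ} (hkm : k ≤ m) :
    (-1 : ℤ) ^ Multiset.card ((π.toggle k hk).plain.filter (· ≤ m)) =
      -(-1) ^ Multiset.card (π.plain.filter (· ≤ m)) := by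
  by_cases hko : k ∈ π.overParts
  · rw [plain_toggle_of_mem hk hko, Multiset.filter_cons_of_pos (p := (· ≤ m)) _ hkm,
      Multiset.card_cons, pow_succ, mul_neg_one]
  · conv_rhs => rw [← Multiset.cons_erase (hk.resolve_left hko)]
    rw [plain_toggle_of_notMem hk hko, Multiset.filter_cons_of_pos (p := (· ≤ m)) _ hkm,
      Multiset.card_cons, pow_succ, mul_neg_one, neg_neg]

end toggle

def movableSizes (π : Overpartition n) : Set ℕ :=
  {k | k < π.maxOver ∧ (k ∈ π.overParts ∨ k ∈ π.plain)}

def IsMovable (π : Overpartition n) : Prop := π.movableSizes.Nonempty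

noncomputable def leastMovable (π : Overpartition n) : ℕ := sInf π.movableSizes

theorem leastMovable_mem {π : Overpartition n} (h : π.IsMovable) :
    π.leastMovable ∈ π.movableSizes :=
  Nat.sInf_mem h

theorem movableSizes_toggle {π : Overpartition n} {k : ℕ}
    (hk : k ∈ π.overParts ∨ k ∈ π.plain) (hkM : k < π.maxOver) :
    (π.toggle k hk).movableSizes = π.movableSizes := by
  ext x
  simp only [movableSizes, Set.mem_ofPred_eq, maxOver_toggle hk hkM, mem_toggle_iff]

theorem overParts_nonempty_of_isMovable {π : Overpartition n} (h : π.IsMovable) :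
    π.overParts.Nonempty := by
  obtain ⟨k, hkM, -⟩ := h
  exact ⟨_, maxOver_mem (nonempty_of_ne_empty fun he => by simp [maxOver, he] at hkM)⟩

noncomputable def toggleLeast (π : Overpartition n) (h : π.IsMovable) : Overpartition n :=
  π.toggle π.leastMovable (leastMovable_mem h).2

section toggleLeast

variable {π : Overpartition n} (h : π.IsMovable)

theorem movableSizes_toggleLeast : (π.toggleLeast h).movableSizes = π.movableSizes :=
  movableSizes_toggle _ (leastMovable_mem h).1

theorem isMovable_toggleLeast : (π.toggleLeast h).IsMovable := by
  rw [IsMovable, movableSizes_toggleLeast]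
  exact h

theorem toggleLeast_toggleLeast :
    (π.toggleLeast h).toggleLeast (isMovable_toggleLeast h) = π :=
  toggle_toggle _ _ (congrArg sInf (movableSizes_toggleLeast h))

theorem neg_one_pow_lNleO_toggleLeast :
    (-1 : ℤ) ^ lNleO (π.toggleLeast h) = -(-1) ^ lNleO π := by
  rw [lNleO_eq_card_filter_le_maxOver (overParts_nonempty_of_isMovable h),
    lNleO_eq_card_filter_le_maxOver (overParts_nonempty_of_isMovable (isMovable_toggleLeast h)),
    toggleLeast, maxOver_toggle _ (leastMovable_mem h).1]
  exact neg_one_pow_card_filter_le_toggle _ (leastMovable_mem h).1.le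

end toggleLeast

theorem sum_isMovable_neg_one_pow_lNleO :
    ∑ π ∈ univ.filter (fun π : Overpartition n => π.IsMovable), (-1 : ℤ) ^ lNleO π = 0 :=
  sum_involution (fun π hπ => π.toggleLeast (mem_filter.1 hπ).2)
    (fun _ hπ => by rw [neg_one_pow_lNleO_toggleLeast, add_neg_cancel])
    (fun _ _ _ => toggle_ne _)
    (fun _ hπ => mem_filter.2 ⟨mem_univ _, isMovable_toggleLeast _⟩)
    (fun _ _ => toggleLeast_toggleLeast _)

section fixed

variable {π : Overpartition n} (hne : π.overParts.Nonempty) (hnm : ¬π.IsMovable)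
include hnm

theorem maxOver_le_of_mem_plain {x : ℕ} (hx : x ∈ π.plain) : π.maxOver ≤ x :=
  not_lt.1 fun hlt => hnm ⟨x, hlt, Or.inr hx⟩

include hne

theorem overParts_eq_singleton_maxOver : π.overParts = {π.maxOver} :=
  eq_singleton_iff_unique_mem.2 ⟨maxOver_mem hne, fun x hx =>
    (le_maxOver hx).eq_or_lt.resolve_right fun hlt => hnm ⟨x, hlt, Or.inl hx⟩⟩

theorem toPartition_parts_eq_cons : π.toPartition.parts = π.maxOver ::ₘ π.plain := by
  rw [toPartition_parts, overParts_eq_singleton_maxOver hne hnm]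
  rfl

theorem minPart_toPartition : π.toPartition.minPart = π.maxOver := by
  refine π.toPartition.minPart_eq_of_forall_le ?_ ?_ <;> rw [toPartition_parts_eq_cons hne hnm]
  · exact Multiset.mem_cons_self _ _
  · exact Multiset.forall_mem_cons.2 ⟨le_rfl, fun _ => maxOver_le_of_mem_plain hnm⟩

theorem lNleO_eq_count_maxOver : lNleO π = π.plain.count π.maxOver := by
  rw [lNleO_eq_card_filter_le_maxOver hne, Multiset.count_eq_card_filter_eq]
  exact congrArg _ (Multiset.filter_congr fun x hx =>
    ⟨fun hle => le_antisymm (maxOver_le_of_mem_plain hnm hx) hle, fun h => h ▸ le_rfl⟩)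

end fixed

def ofPartition (p : n.Partition) : Overpartition n where
  overParts := ∅
  plain := p.parts
  over_pos := by simp
  plain_pos _ := p.parts_pos
  sum_eq := by simpa using p.parts_sum

noncomputable def overlineMinPart (hn : 0 < n) (p : n.Partition) : Overpartition n where
  overParts := {p.minPart}
  plain := p.parts.erase p.minPart
  over_pos := by simpa using p.parts_pos (p.minPart_mem hn)
  plain_pos _ hx := p.parts_pos (Multiset.mem_of_mem_erase hx)
  sum_eq := by
    rw [sum_singleton, Multiset.sum_erase (p.minPart_mem hn), p.parts_sum]

theorem sum_not_isMovable_overParts_eq_empty :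
    ∑ π ∈ univ.filter (fun π : Overpartition n => ¬π.IsMovable ∧ π.overParts = ∅),
      (-1 : ℤ) ^ lNleO π = ∑ p : n.Partition, (-1 : ℤ) ^ Multiset.card p.parts := by
  refine sum_nbij' toPartition ofPartition (fun _ _ => mem_univ _) (fun p _ => ?_)
    (fun π hπ => ?_) (fun p _ => ?_) (fun π hπ => ?_)
  · refine mem_filter.2 ⟨mem_univ _, ?_, rfl⟩
    rintro ⟨k, hk, -⟩
    simp [maxOver, ofPartition] at hk
  · exact ext (mem_filter.1 hπ).2.2.symm (by simp [ofPartition, (mem_filter.1 hπ).2.2])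
  · exact Nat.Partition.ext (zero_add p.parts)
  · simp [lNleO, (mem_filter.1 hπ).2.2]

theorem sum_not_isMovable_overParts_ne_empty (hn : 0 < n) :
    ∑ π ∈ univ.filter (fun π : Overpartition n => ¬π.IsMovable ∧ ¬π.overParts = ∅),
      (-1 : ℤ) ^ lNleO π = ∑ p : n.Partition, (-1 : ℤ) ^ (p.parts.count p.minPart + 1) := by
  refine sum_nbij' toPartition (overlineMinPart hn) (fun _ _ => mem_univ _) (fun p _ => ?_)
    (fun π hπ => ?_) (fun p _ => ?_) (fun π hπ => ?_)
  · have hmax : (overlineMinPart hn p).maxOver = p.minPart := sup_singleton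
    refine mem_filter.2 ⟨mem_univ _, ?_, singleton_ne_empty _⟩
    rintro ⟨k, hk, hmem | hmem⟩ <;> rw [hmax] at hk
    · exact hk.ne (mem_singleton.1 hmem)
    · exact hk.not_ge (p.minPart_le (Multiset.mem_of_mem_erase hmem))
  · obtain ⟨-, hnm, hne⟩ := mem_filter.1 hπ
    have hne := nonempty_iff_ne_empty.2 hne
    refine ext ?_ ?_
    · exact (minPart_toPartition hne hnm ▸ overParts_eq_singleton_maxOver hne hnm).symm
    · change π.toPartition.parts.erase _ = _
      rw [minPart_toPartition hne hnm, toPartition_parts_eq_cons hne hnm,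
        Multiset.erase_cons_head]
  · refine Nat.Partition.ext ?_
    change ({p.minPart} : Finset ℕ).val + p.parts.erase p.minPart = p.parts
    rw [singleton_val, Multiset.singleton_add, Multiset.cons_erase (p.minPart_mem hn)]
  · obtain ⟨-, hnm, hne⟩ := mem_filter.1 hπ
    have hne := nonempty_iff_ne_empty.2 hne
    rw [lNleO_eq_count_maxOver hne hnm, minPart_toPartition hne hnm,
      toPartition_parts_eq_cons hne hnm, Multiset.count_cons_self]
    ring

theorem sum_neg_one_pow_lNleO (hn : 0 < n) :
    ∑ π : Overpartition n, (-1 : ℤ) ^ lNleO π =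
      ∑ p : n.Partition,
        ((-1 : ℤ) ^ Multiset.card p.parts + (-1) ^ (p.parts.count p.minPart + 1)) := by
  rw [← sum_filter_add_sum_filter_not univ IsMovable, sum_isMovable_neg_one_pow_lNleO,
    zero_add,
    ← sum_filter_add_sum_filter_not _ (fun π => π.overParts = ∅), filter_filter,
    filter_filter,
    sum_not_isMovable_overParts_eq_empty, sum_not_isMovable_overParts_ne_empty hn, sum_add_distrib]

end Overpartition

theorem stmt_13 (n : ℕ) (hn : 1 ≤ n) :
    (Nat.card {π : Overpartition n // Even (lNleO π)} : ℤ) -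
      Nat.card {π : Overpartition n // Odd (lNleO π)} =
    2 * ((Nat.card {p : n.Partition //
            Odd (p.parts.count (sInf {x | x ∈ p.parts})) ∧
            Odd (Multiset.card
              (p.parts.filter (fun x => sInf {x | x ∈ p.parts} < x)))} : ℤ) -
          Nat.card {p : n.Partition //
            Even (p.parts.count (sInf {x | x ∈ p.parts})) ∧
            Odd (Multiset.card
              (p.parts.filter (fun x => sInf {x | x ∈ p.parts} < x)))}) := by
  rw [natCard_sub_natCard_eq_sum_ite, natCard_sub_natCard_eq_sum_ite, mul_sum]
  simp only [← neg_one_pow_eq_ite_even_sub_ite_odd]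
  rw [Overpartition.sum_neg_one_pow_lNleO hn]
  exact sum_congr rfl fun p _ => p.neg_one_pow_card_parts_add_neg_one_pow_count_minPart_succ
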